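/- arXiv:1105.4156 — 5 statements merged into one kernel-verified Lean document; each statement's English description precedes it below -/
import Mathlib

section
/- Let α₁, …, αₙ be distinct complex numbers and T the n × n matrix with T_{ij} = -∏_{k ≠ i, k ≠ j}(α_i - α_k) for i ≠ j and T_{ii} = ∑_{j ≠ i} ∏_{k ≠ i, k ≠ j}(α_i - α_k). Then the rank of T is exactly n - 1. -/
/-!
Let `f = ∏ₖ (X - αₖ)` and let `p` be the polynomial of degree `< n` interpolating a vector `x`.
Since `Tᵢⱼ = -f'(αᵢ) / (αᵢ - αⱼ)` off the diagonal, `T x = 0` says exactly that the Wronskian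
`p f' - p' f` agrees to first order at every node with `∑ⱼ xⱼ ∏_{k ≠ j} (X - αₖ)`; both have
degree `< 2n`, so they are equal and the Wronskian has degree `< n`. But if `0 < deg p = m < n`,
the Wronskian has degree `m + n - 1 ≥ n`, with leading coefficient `(n - m) lc(p)`. Hence `p` is
constant: the kernel of `T` is spanned by `(1, …, 1)`.
-/

open Finset Polynomial Lagrange

namespace Polynomial

variable {R : Type*} [CommRing R]

theorem natDegree_wronskian_le (a b : R[X]) :
    (wronskian a b).natDegree ≤ a.natDegree + b.natDegree - 1 := by
  by_cases hw : wronskian a b = 0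
  · simp [hw]
  · have := natDegree_wronskian_lt_add hw
    omega

theorem derivative_wronskian (a b : R[X]) :
    derivative (wronskian a b) = a * derivative (derivative b) - derivative (derivative a) * b := by
  rw [wronskian, derivative_sub, derivative_mul, derivative_mul]
  ring

theorem coeff_wronskian_natDegree_add_sub_one {a b : R[X]} (ha : 0 < a.natDegree)
    (hb : 0 < b.natDegree) :
    (wronskian a b).coeff (a.natDegree + b.natDegree - 1) =
      ((b.natDegree : R) - a.natDegree) * a.leadingCoeff * b.leadingCoeff := by
  set m := a.natDegree
  set n := b.natDegree
  have hab : (a * derivative b).coeff (m + n - 1) = a.leadingCoeff * (b.leadingCoeff * n) := by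
    rw [show m + n - 1 = m + (n - 1) by omega,
      coeff_mul_add_eq_of_natDegree_le le_rfl (natDegree_derivative_le b), coeff_derivative,
      Nat.sub_add_cancel hb, Nat.cast_pred hb, sub_add_cancel]
    rfl
  have hba : (derivative a * b).coeff (m + n - 1) = a.leadingCoeff * m * b.leadingCoeff := by
    rw [show m + n - 1 = m - 1 + n by omega,
      coeff_mul_add_eq_of_natDegree_le (natDegree_derivative_le a) le_rfl, coeff_derivative,
      Nat.sub_add_cancel ha, Nat.cast_pred ha, sub_add_cancel]
    rfl
  rw [wronskian, coeff_sub, hab, hba]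
  ring

theorem natDegree_eq_zero_of_degree_wronskian_lt [IsDomain R] [CharZero R] {p f : R[X]}
    (hp : p.degree < f.degree) (hw : (wronskian p f).degree < f.degree) : p.natDegree = 0 := by
  by_contra hp0
  have hp_ne : p ≠ 0 := by rintro rfl; exact hp0 natDegree_zero
  have hf_ne : f ≠ 0 := by rintro rfl; exact not_lt_bot hp
  have hpf : p.natDegree < f.natDegree := natDegree_lt_natDegree hp_ne hp
  have hcoeff : (wronskian p f).coeff (p.natDegree + f.natDegree - 1) ≠ 0 := by
    rw [coeff_wronskian_natDegree_add_sub_one (Nat.pos_of_ne_zero hp0) (by omega)]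
    refine mul_ne_zero (mul_ne_zero ?_ (leadingCoeff_ne_zero.2 hp_ne))
      (leadingCoeff_ne_zero.2 hf_ne)
    exact sub_ne_zero.2 (by exact_mod_cast hpf.ne')
  have := (le_degree_of_ne_zero hcoeff).trans_lt hw
  rw [degree_eq_natDegree hf_ne, Nat.cast_lt] at this
  omega

end Polynomial

namespace Lagrange

section CommRing

variable {R ι : Type*} [CommRing R] [DecidableEq ι] {s : Finset ι} {v : ι → R} {i : ι}

theorem eval_derivative_sum_C_mul_nodal_erase (c : ι → R) (hi : i ∈ s) :
    eval (v i) (derivative (∑ j ∈ s, C (c j) * nodal (s.erase j) v)) =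
      ∑ j ∈ s.erase i, (c i + c j) * eval (v i) (nodal ((s.erase i).erase j) v) := by
  rw [derivative_sum, eval_finsetSum, ← add_sum_erase _ _ hi]
  simp only [derivative_mul, derivative_C, zero_mul, zero_add, eval_mul, eval_C]
  rw [derivative_nodal, eval_finsetSum, mul_sum, ← sum_add_distrib]
  refine sum_congr rfl fun j hj => ?_
  rw [eval_nodal_derivative_eval_node_eq (mem_erase.2 ⟨(ne_of_mem_erase hj).symm, hi⟩),
    erase_right_comm]
  ring

theorem eval_derivative_derivative_nodal (hi : i ∈ s) :
    eval (v i) (derivative (derivative (nodal s v))) =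
      2 * ∑ j ∈ s.erase i, eval (v i) (nodal ((s.erase i).erase j) v) := by
  have h := eval_derivative_sum_C_mul_nodal_erase (v := v) (fun _ => 1) hi
  simp only [map_one, one_mul] at h
  rw [derivative_nodal, h, mul_sum, one_add_one_eq_two]

end CommRing

section Field

variable {F ι : Type*} [Field F] [DecidableEq ι] {s : Finset ι} {v : ι → F}

theorem degree_sum_C_mul_nodal_erase_lt (r : ι → F) :
    (∑ j ∈ s, C (r j) * nodal (s.erase j) v).degree < #s := by
  refine mem_degreeLT.1 (Submodule.sum_mem _ fun j hj => mem_degreeLT.2 ?_)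
  rw [← smul_eq_C_mul]
  refine (degree_smul_le _ _).trans_lt ?_
  rw [degree_nodal, Nat.cast_lt]
  exact card_erase_lt_of_mem hj

theorem wronskian_interpolate_nodal_modByMonic (hvs : Set.InjOn v s) (r : ι → F) :
    wronskian (interpolate s v r) (nodal s v) %ₘ nodal s v =
      ∑ j ∈ s, C (r j) * nodal (s.erase j) v := by
  refine eq_of_degrees_lt_of_eval_index_eq s hvs ?_ (degree_sum_C_mul_nodal_erase_lt r)
    fun i hi => ?_
  · rw [← degree_nodal (v := v)]
    exact degree_modByMonic_lt _ nodal_monic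
  · rw [modByMonic_eq_sub_mul_div, eval_sub, eval_mul, eval_nodal_at_node hi,
      zero_mul, sub_zero, wronskian, eval_sub, eval_mul, eval_mul, eval_nodal_at_node hi,
      mul_zero, sub_zero, eval_interpolate_at_node r hvs hi,
      eval_nodal_derivative_eval_node_eq hi, eval_finsetSum, ← add_sum_erase _ _ hi,
      eval_mul, eval_C, left_eq_add]
    refine sum_eq_zero fun j hj => ?_
    rw [eval_mul, eval_nodal_at_node (mem_erase.2 ⟨(ne_of_mem_erase hj).symm, hi⟩), mul_zero]

theorem wronskian_interpolate_nodal_eq (hvs : Set.InjOn v s) {r : ι → F}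
    (hr : ∀ i ∈ s, ∑ j ∈ s.erase i, eval (v i) (nodal ((s.erase i).erase j) v) * (r i - r j) = 0) :
    wronskian (interpolate s v r) (nodal s v) = ∑ j ∈ s, C (r j) * nodal (s.erase j) v := by
  rcases s.eq_empty_or_nonempty with rfl | hs
  · simp
  have hdecomp := modByMonic_add_div (wronskian (interpolate s v r) (nodal s v)) (nodal s v)
  rw [wronskian_interpolate_nodal_modByMonic hvs r] at hdecomp
  set q := wronskian (interpolate s v r) (nodal s v) /ₘ nodal s v with hq_def
  suffices hq : q = 0 by rw [← hdecomp, hq, mul_zero, add_zero]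
  refine eq_zero_of_degree_lt_of_eval_index_eq_zero s hvs ?_ fun i hi => ?_
  · have hp : (interpolate s v r).natDegree < #s := by
      by_cases hp0 : interpolate s v r = 0
      · rw [hp0, natDegree_zero]; exact hs.card_pos
      · exact (natDegree_lt_iff_degree_lt hp0).2 (degree_interpolate_lt r hvs)
    have hq : q.natDegree < #s := by
      have := natDegree_wronskian_le (interpolate s v r) (nodal s v)
      rw [hq_def, natDegree_divByMonic _ nodal_monic, natDegree_nodal]
      rw [natDegree_nodal] at this
      omega
    exact degree_le_natDegree.trans_lt (by exact_mod_cast hq)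
  · -- Differentiating `hdecomp` at `v i` leaves `f'(v i) * q(v i)` equal to the left-hand side
    -- of `hr i`, where `f = nodal s v`.
    have hf : eval (v i) (nodal s v) = 0 := eval_nodal_at_node hi
    have hf' : eval (v i) (derivative (nodal s v)) ≠ 0 := by
      have := nodalWeight_ne_zero hvs hi
      rwa [nodalWeight_eq_eval_derivative_nodal hi, ne_eq, inv_eq_zero] at this
    have h := congrArg (fun g => eval (v i) (derivative g)) hdecomp
    simp only [derivative_add, derivative_mul, derivative_wronskian, eval_add, eval_sub,
      eval_mul, hf, mul_zero, zero_mul, add_zero, sub_zero] at h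
    rw [eval_derivative_sum_C_mul_nodal_erase r hi, eval_derivative_derivative_nodal hi,
      eval_interpolate_at_node r hvs hi] at h
    have hsum : ∑ j ∈ s.erase i, (r i + r j) * eval (v i) (nodal ((s.erase i).erase j) v) =
        r i * (2 * ∑ j ∈ s.erase i, eval (v i) (nodal ((s.erase i).erase j) v)) -
          ∑ j ∈ s.erase i, eval (v i) (nodal ((s.erase i).erase j) v) * (r i - r j) := by
      rw [mul_sum, mul_sum, ← sum_sub_distrib]
      exact sum_congr rfl fun j _ => by ring
    refine (mul_eq_zero.1 ?_).resolve_left hf'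
    linear_combination h - hsum + hr i hi

theorem exists_eq_const_of_sum_eval_nodal_mul_sub_eq_zero [CharZero F] (hvs : Set.InjOn v s)
    {r : ι → F}
    (hr : ∀ i ∈ s, ∑ j ∈ s.erase i, eval (v i) (nodal ((s.erase i).erase j) v) * (r i - r j) = 0) :
    ∃ c, ∀ i ∈ s, r i = c := by
  have hconst : (interpolate s v r).natDegree = 0 := by
    refine natDegree_eq_zero_of_degree_wronskian_lt (f := nodal s v) ?_ ?_ <;> rw [degree_nodal]
    · exact degree_interpolate_lt r hvs
    · rw [wronskian_interpolate_nodal_eq hvs hr]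
      exact degree_sum_C_mul_nodal_erase_lt r
  obtain ⟨c, hc⟩ := natDegree_eq_zero.1 hconst
  exact ⟨c, fun i hi => by rw [← eval_interpolate_at_node r hvs hi, ← hc, eval_C]⟩

end Field

end Lagrange

section RootDerivJacobian

open Matrix

variable {K ι : Type*} [Field K] [Fintype ι] [DecidableEq ι]

/-- Entry `(i, j)` is `∂ f'(αᵢ) / ∂αⱼ` for `f = ∏ₖ (X - αₖ)`. -/
def rootDerivJacobian (α : ι → K) : Matrix ι ι K :=
  of fun i j => if i = j then ∑ j' ∈ univ \ {i}, ∏ k ∈ univ \ {i, j'}, (α i - α k)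
    else -∏ k ∈ univ \ {i, j}, (α i - α k)

theorem rootDerivJacobian_mulVec_apply (α x : ι → K) (i : ι) :
    (rootDerivJacobian α *ᵥ x) i =
      ∑ j ∈ univ.erase i, eval (α i) (nodal ((univ.erase i).erase j) α) * (x i - x j) := by
  have hP : ∀ j, ∏ k ∈ univ \ {i, j}, (α i - α k) =
      eval (α i) (nodal ((univ.erase i).erase j) α) := by
    intro j
    rw [eval_nodal]
    congr 1
    ext k
    simp only [mem_sdiff, mem_univ, true_and, mem_insert, mem_singleton, mem_erase]
    tauto
  simp only [mulVec, dotProduct, rootDerivJacobian, of_apply]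
  rw [← add_sum_erase _ _ (mem_univ i), if_pos rfl, sdiff_singleton_eq_erase, sum_mul,
    ← sum_add_distrib]
  refine sum_congr rfl fun j hj => ?_
  rw [if_neg (ne_of_mem_erase hj).symm, hP]
  ring

theorem ker_rootDerivJacobian [CharZero K] {α : ι → K} (hα : Function.Injective α) :
    LinearMap.ker (rootDerivJacobian α).mulVecLin = K ∙ (1 : ι → K) := by
  ext x
  rw [LinearMap.mem_ker, mulVecLin_apply, Submodule.mem_span_singleton]
  constructor
  · intro hx
    obtain ⟨c, hc⟩ := exists_eq_const_of_sum_eval_nodal_mul_sub_eq_zero (s := univ) (r := x)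
      hα.injOn fun i _ => by rw [← rootDerivJacobian_mulVec_apply, hx, Pi.zero_apply]
    exact ⟨c, funext fun i => by simp [hc i (mem_univ i)]⟩
  · rintro ⟨c, rfl⟩
    funext i
    simp [rootDerivJacobian_mulVec_apply]

theorem rank_rootDerivJacobian [CharZero K] {α : ι → K} (hα : Function.Injective α) :
    (rootDerivJacobian α).rank = Fintype.card ι - 1 := by
  have h := LinearMap.finrank_range_add_finrank_ker (rootDerivJacobian α).mulVecLin
  rw [ker_rootDerivJacobian hα, Module.finrank_fintype_fun_eq_card] at h
  rw [Matrix.rank]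
  rcases isEmpty_or_nonempty ι with hι | hι
  · rw [Fintype.card_eq_zero] at h ⊢
    omega
  · rw [finrank_span_singleton one_ne_zero] at h
    omega

end RootDerivJacobian

theorem stmt2_general (n : ℕ) (α : Fin n → ℂ) (hα : Function.Injective α) :
    (Matrix.of fun i j : Fin n =>
      if i = j then ∑ j' ∈ univ \ {i}, ∏ k ∈ univ \ {i, j'}, (α i - α k)
      else -∏ k ∈ univ \ {i, j}, (α i - α k)).rank = n - 1 := by
  have h := rank_rootDerivJacobian hα
  rwa [Fintype.card_fin] at h

theorem stmt2 (n : ℕ) (hn : 0 < n) (α : Fin n → ℂ) (hα : Function.Injective α) :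
    (Matrix.of fun i j : Fin n =>
      if i = j then ∑ j' ∈ univ \ {i}, ∏ k ∈ univ \ {i, j'}, (α i - α k)
      else -∏ k ∈ univ \ {i, j}, (α i - α k)).rank = n - 1 :=
  stmt2_general n α hα
end

section
/- Let α₁, …, αₙ be distinct complex numbers, T the n × n matrix with T_{ij} = -∏_{k ≠ i, k ≠ j}(α_i - α_k) for i ≠ j and T_{ii} = ∑_{j ≠ i} ∏_{k ≠ i, k ≠ j}(α_i - α_k), and Dₙ the determinant of the (n−1) × (n−1) matrix obtained from T by deleting the n-th row and n-th column. Then Dₙ = (-1)^{C(n-1,2)} · (n-1)! · ∏_{1 ≤ i < j < n}(α_i - α_j)². -/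
/-!
Write `f = ∏ₖ (X - αₖ)`, so that `f'(αᵢ) = ∏_{k ≠ i} (αᵢ - αₖ)`. Lagrange interpolation on the
nodes `α` shows that `T` is, up to diagonal scalings, the transpose of the differentiation matrix:
`q'(αᵢ) = f'(αᵢ) ∑ⱼ Tⱼᵢ q(αⱼ) / f'(αⱼ)²` whenever `deg q < n`. The polynomials
`q = (X - αₙ)^(k+1)` vanish at the deleted node, so the transpose of the reduced matrix sends a
rescaled Vandermonde matrix in the `αⱼ - αₙ` to another one whose `k`-th column is multiplied by
`k + 1`. Comparing determinants gives `Dₙ = (n-1)! ∏_{i<n} g'(αᵢ)` with `g = ∏_{k<n} (X - αₖ)`, and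
`∏ᵢ g'(αᵢ)` is `(-1)^C(n-1,2)` times the product of the squared differences.
-/

open Finset Polynomial Matrix

def rootMatrix {R ι : Type*} [CommRing R] [Fintype ι] [DecidableEq ι] (α : ι → R) :
    Matrix ι ι R :=
  of fun i j =>
    if i = j then ∑ j' ∈ univ \ {i}, ∏ k ∈ univ \ {i, j'}, (α i - α k)
    else -∏ k ∈ univ \ {i, j}, (α i - α k)

theorem Finset.sdiff_pair_eq_erase_erase {ι : Type*} [DecidableEq ι] (s : Finset ι) (i j : ι) :
    s \ {i, j} = (s.erase i).erase j := by
  rw [sdiff_insert, sdiff_singleton_eq_erase, erase_right_comm]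

namespace Lagrange

variable {F ι : Type*} [Field F] [DecidableEq ι]

theorem basis_eq_C_mul_nodal_erase {s : Finset ι} {v : ι → F} {i : ι} (hi : i ∈ s) :
    Lagrange.basis s v i = C (eval (v i) (derivative (nodal s v)))⁻¹ * nodal (s.erase i) v := by
  rw [← nodalWeight_eq_eval_derivative_nodal hi, basis_eq_prod_sub_inv_mul_nodal_div hi,
    nodal_erase_eq_nodal_div hi]

variable [Fintype ι]

theorem eval_derivative_nodal_erase_self (α : ι → F) (i : ι) :
    eval (α i) (derivative (nodal (univ.erase i) α)) = rootMatrix α i i := by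
  simp only [rootMatrix, of_apply, if_pos, derivative_nodal, eval_finsetSum, eval_nodal,
    sdiff_singleton_eq_erase, sdiff_pair_eq_erase_erase]

theorem eval_derivative_nodal_erase_of_ne (α : ι → F) {i j : ι} (h : i ≠ j) :
    eval (α i) (derivative (nodal (univ.erase j) α)) = -rootMatrix α i j := by
  rw [eval_nodal_derivative_eval_node_eq (mem_erase.2 ⟨h, mem_univ i⟩), eval_nodal,
    rootMatrix, of_apply, if_neg h, neg_neg, erase_right_comm, sdiff_pair_eq_erase_erase]

theorem eval_derivative_nodal_eq_mul_rootMatrix (α : ι → F) {i j : ι} (h : i ≠ j) :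
    eval (α i) (derivative (nodal univ α)) = (α j - α i) * rootMatrix α i j := by
  rw [eval_nodal_derivative_eval_node_eq (mem_univ i), eval_nodal, rootMatrix, of_apply, if_neg h,
    sdiff_pair_eq_erase_erase, ← mul_prod_erase _ _ (mem_erase.2 ⟨h.symm, mem_univ j⟩)]
  ring

theorem eval_derivative_nodal_mul_eval_derivative_nodal_erase (α : ι → F) (i j : ι) :
    eval (α j) (derivative (nodal univ α)) * eval (α i) (derivative (nodal (univ.erase j) α)) =
      eval (α i) (derivative (nodal univ α)) * rootMatrix α j i := by
  rcases eq_or_ne i j with rfl | h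
  · rw [eval_derivative_nodal_erase_self]
  · rw [eval_derivative_nodal_erase_of_ne α h, eval_derivative_nodal_eq_mul_rootMatrix α h,
      eval_derivative_nodal_eq_mul_rootMatrix α h.symm]
    ring

theorem eval_derivative_basis (α : ι → F) (i j : ι) :
    eval (α i) (derivative (Lagrange.basis univ α j)) =
      eval (α i) (derivative (nodal univ α)) * rootMatrix α j i /
        eval (α j) (derivative (nodal univ α)) ^ 2 := by
  rw [basis_eq_C_mul_nodal_erase (mem_univ j), derivative_C_mul, eval_mul, eval_C,
    ← eval_derivative_nodal_mul_eval_derivative_nodal_erase]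
  by_cases h : eval (α j) (derivative (nodal univ α)) = 0
  · simp [h]
  · field_simp

theorem eval_derivative_eq_sum_rootMatrix {α : ι → F} (hα : Function.Injective α) {q : F[X]}
    (hq : q.degree < Fintype.card ι) (i : ι) :
    eval (α i) (derivative q) = eval (α i) (derivative (nodal univ α)) *
      ∑ j, rootMatrix α j i * (eval (α j) q / eval (α j) (derivative (nodal univ α)) ^ 2) := by
  conv_lhs => rw [eq_interpolate hα.injOn hq]
  simp only [interpolate_apply, derivative_sum, derivative_C_mul, eval_finsetSum, eval_mul,
    eval_C, eval_derivative_basis, mul_sum]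
  exact sum_congr rfl fun j _ => by ring

theorem eval_derivative_nodal_ne_zero {α : ι → F} (hα : Function.Injective α) (i : ι) :
    eval (α i) (derivative (nodal univ α)) ≠ 0 := by
  rw [← inv_inv (eval _ _), ← nodalWeight_eq_eval_derivative_nodal (mem_univ i)]
  exact inv_ne_zero (nodalWeight_ne_zero hα.injOn (mem_univ i))

end Lagrange

open Lagrange

theorem Fin.sum_card_Ioi (n : ℕ) : ∑ i : Fin n, #(Ioi i) = n.choose 2 := by
  have h := Fintype.card_product_filter_lt (α := Fin n)
  rw [Fintype.card_fin, card_filter, Fintype.sum_prod_type] at h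
  simpa only [← card_filter, filter_lt_eq_Ioi] using h

theorem prod_eval_derivative_nodal {R : Type*} [CommRing R] {n : ℕ} (a : Fin n → R) :
    ∏ j, eval (a j) (derivative (nodal univ a)) =
      (-1) ^ n.choose 2 * ∏ i, ∏ j ∈ Ioi i, (a i - a j) ^ 2 := by
  have hoff := prod_prod_Ioi_mul_eq_prod_prod_off_diag fun i j => a j - a i
  simp only [compl_eq_univ_sdiff, sdiff_singleton_eq_erase] at hoff
  simp only [eval_nodal_derivative_eval_node_eq (mem_univ _), eval_nodal,
    ← hoff, ← Fin.sum_card_Ioi, ← prod_pow_eq_pow_sum, ← prod_mul_distrib, ← prod_neg]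
  exact prod_congr rfl fun i _ => prod_congr rfl fun j _ => by ring

theorem eval_derivative_nodal_castSucc {R : Type*} [CommRing R] {n : ℕ} (α : Fin (n + 1) → R)
    (j : Fin n) :
    eval (α j.castSucc) (derivative (nodal univ α)) = (α j.castSucc - α (Fin.last n)) *
      eval (α j.castSucc) (derivative (nodal univ fun l : Fin n => α l.castSucc)) := by
  have hsplit :
      nodal univ α = nodal univ (fun l : Fin n => α l.castSucc) * (X - C (α (Fin.last n))) := by
    simp only [nodal, Fin.prod_univ_castSucc]
  rw [hsplit, derivative_mul, eval_add, eval_mul, eval_mul,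
    eval_nodal_at_node (v := fun l : Fin n => α l.castSucc) (mem_univ j)]
  simp only [eval_sub, eval_X, eval_C, derivative_sub, derivative_X, derivative_C]
  ring

section ReducedMatrix

variable {F : Type*} [Field F] {n : ℕ} {α : Fin (n + 1) → F}

theorem sum_rootMatrix_castSucc_mul_pow (hα : Function.Injective α) (i : Fin n) {k : ℕ}
    (hk : k < n) :
    ∑ j : Fin n, rootMatrix α j.castSucc i.castSucc *
        ((α j.castSucc - α (Fin.last n)) / eval (α j.castSucc) (derivative (nodal univ α)) ^ 2 *
          (α j.castSucc - α (Fin.last n)) ^ k) =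
      (eval (α i.castSucc) (derivative (nodal univ α)))⁻¹ *
        ((k + 1) * (α i.castSucc - α (Fin.last n)) ^ k) := by
  have hdeg : ((X - C (α (Fin.last n))) ^ (k + 1)).degree <
      (Fintype.card (Fin (n + 1)) : WithBot ℕ) := by
    rw [degree_pow, degree_X_sub_C, Fintype.card_fin, nsmul_one]
    exact_mod_cast Nat.succ_lt_succ hk
  have key := eval_derivative_eq_sum_rootMatrix hα hdeg i.castSucc
  simp only [Fin.sum_univ_castSucc, derivative_X_sub_C_pow, eval_mul, eval_pow, eval_sub, eval_X,
    eval_C, sub_self, zero_pow k.succ_ne_zero, zero_div, mul_zero, add_zero,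
    Nat.add_sub_cancel, Nat.cast_succ] at key
  rw [eq_inv_mul_iff_mul_eq₀ (eval_derivative_nodal_ne_zero hα _), key]
  congr 1
  exact sum_congr rfl fun j _ => by ring

theorem det_rootMatrix_submatrix_castSucc (hα : Function.Injective α) :
    ((rootMatrix α).submatrix Fin.castSucc Fin.castSucc).det = n.factorial *
      ∏ j : Fin n, eval (α j.castSucc) (derivative (nodal univ fun l : Fin n => α l.castSucc)) := by
  set P : Fin (n + 1) → F := fun i => eval (α i) (derivative (nodal univ α))
  set h : Fin n → F := fun j =>
    eval (α j.castSucc) (derivative (nodal univ fun l : Fin n => α l.castSucc))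
  set v : Fin n → F := fun j => α j.castSucc - α (Fin.last n)
  set W := vandermonde v
  have hP (j : Fin n) : P j.castSucc = v j * h j := eval_derivative_nodal_castSucc α j
  have hPne (j : Fin n) : v j * h j ≠ 0 := hP j ▸ eval_derivative_nodal_ne_zero hα _
  have hW : W.det ≠ 0 := det_vandermonde_ne_zero_iff.mpr fun i j hij =>
    Fin.castSucc_injective n (hα (sub_left_injective hij))
  have hcol : ((rootMatrix α).submatrix Fin.castSucc Fin.castSucc)ᵀ *
      of (fun j k => v j / P j.castSucc ^ 2 * W j k) =
      of fun i k : Fin n => (P i.castSucc)⁻¹ * (((k : ℕ) + 1 : F) * W i k) := by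
    ext i k
    simpa only [mul_apply, transpose_apply, submatrix_apply, of_apply, W, vandermonde_apply]
      using sum_rootMatrix_castSucc_mul_pow hα i k.isLt
  have hV : (of fun i k : Fin n => (P i.castSucc)⁻¹ * (((k : ℕ) + 1 : F) * W i k)).det =
      (∏ i : Fin n, (P i.castSucc)⁻¹) * ((∏ k : Fin n, ((k : ℕ) + 1 : F)) * W.det) :=
    (det_mul_column _ (of fun i k : Fin n => ((k : ℕ) + 1 : F) * W i k)).trans
      (congrArg _ (det_mul_row _ _))
  have hfact : ∏ k : Fin n, ((k : ℕ) + 1 : F) = n.factorial := by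
    rw [Fin.prod_univ_eq_prod_range (fun k => (k : F) + 1), ← prod_range_add_one_eq_factorial]
    push_cast
    rfl
  have hdet := congrArg det hcol
  rw [det_mul, det_transpose, det_mul_column, hV, hfact] at hdet
  have hinv (j : Fin n) : (P j.castSucc)⁻¹ = v j / P j.castSucc ^ 2 * h j := by
    rw [hP]
    have := hPne j
    field_simp
  have hc : ∏ j, v j / P j.castSucc ^ 2 ≠ 0 := prod_ne_zero_iff.2 fun j _ =>
    div_ne_zero (left_ne_zero_of_mul (hPne j)) (pow_ne_zero _ (eval_derivative_nodal_ne_zero hα _))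
  rw [prod_congr rfl fun j _ => hinv j, prod_mul_distrib] at hdet
  exact mul_right_cancel₀ (mul_ne_zero hc hW) (hdet.trans (by ring))

end ReducedMatrix

/-- Here the number of roots is `n + 1` (the paper's `n`), so the paper's `n - 1` is `n`. -/
theorem stmt3 (n : ℕ) (α : Fin (n + 1) → ℂ) (hα : Function.Injective α)
    (T : Matrix (Fin (n + 1)) (Fin (n + 1)) ℂ)
    (hT : ∀ i j, T i j =
      if i = j then ∑ j' ∈ univ \ {i}, ∏ k ∈ univ \ {i, j'}, (α i - α k)
      else -∏ k ∈ univ \ {i, j}, (α i - α k)) :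
    (T.submatrix Fin.castSucc Fin.castSucc).det =
      (-1 : ℂ) ^ (Nat.choose n 2) * (Nat.factorial n : ℂ) *
        ∏ i : Fin n, ∏ j ∈ univ.filter (fun j => i < j),
          (α i.castSucc - α j.castSucc) ^ 2 := by
  obtain rfl : T = rootMatrix α := Matrix.ext hT
  rw [det_rootMatrix_submatrix_castSucc hα, prod_eval_derivative_nodal]
  simp only [filter_lt_eq_Ioi]
  ring
end

section
/- Let α₁, …, αₙ be distinct complex numbers and T as above. For every index k between 1 and n, the determinant D_k of the matrix obtained from T by deleting the k-th row and k-th column equals (-1)^{C(n-1,2)} · (n-1)! · ∏_{i < j, i ≠ k, j ≠ k}(α_i - α_j)², and in particular D_k ≠ 0. -/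
/-!
Put `u i = α (k.succAbove i) - α k` and `e i = ∏_{j ≠ i} (u i - u j)`. As
`∏_{m ≠ i, j} (α i - α m) = f'(α i) / (α i - α j)` for `f = ∏ (X - α m)`, the minor is
`diag(e) * B` with `B = 1 + diag(u) * L`, where `L` is the Laplacian of the complete graph on the
`u i` with edge weights `1 / (u i - u j)`. Since `(x ^ (m + 1) - y ^ (m + 1)) / (x - y)` is a sum
of monomials, `B` sends the column `(u i ^ (m + 1))_i` to `n - m` times itself plus lower columns
with power sums as coefficients: in the basis of the columns of `diag(u) * V(u)`, `V` the
Vandermonde matrix, `B` is upper triangular with diagonal `n, …, 1`, so `det B = n!`. Finally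
`∏ e i` is `(-1) ^ (n choose 2)` times the discriminant of the `u i`, which is that of the
`α (k.succAbove i)`.
-/

open Finset Matrix
open scoped Nat

section ShiftedLaplacian

variable {K : Type*} [Field K] {n : ℕ}

def powerSum (u : Fin n → K) (t : ℕ) : K := ∑ j, u j ^ t

/-- `1 + diag(u) * L`, where `L` is the Laplacian of the complete graph on the points `u i`
with edge weights `1 / (u i - u j)`. -/
def shiftedLaplacian (u : Fin n → K) : Matrix (Fin n) (Fin n) K :=
  of fun i j =>
    if i = j then 1 + ∑ j' ∈ univ.erase i, u i / (u i - u j') else -(u i / (u i - u j))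

/-- The matrix of `shiftedLaplacian u` in the basis of the columns `(u i ^ (s + 1))_i`. -/
def powerSumMatrix (u : Fin n → K) : Matrix (Fin n) (Fin n) K :=
  of (fun s m : Fin n => if s ≤ m then powerSum u (m - s) else 0) -
    diagonal fun m : Fin n => ((m : ℕ) : K)

theorem shiftedLaplacian_mulVec_apply (u f : Fin n → K) (i : Fin n) :
    (shiftedLaplacian u *ᵥ f) i =
      f i + u i * ∑ j ∈ univ.erase i, (f i - f j) / (u i - u j) := by
  rw [mulVec, dotProduct, ← add_sum_erase _ _ (mem_univ i), mul_sum]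
  simp only [shiftedLaplacian, of_apply, if_true, add_mul, one_mul, sum_mul]
  rw [add_assoc, ← sum_add_distrib]
  congr 1
  refine sum_congr rfl fun j hj => ?_
  rw [if_neg (ne_of_mem_erase hj).symm]
  ring

theorem diagonal_mul_vandermonde_apply (u : Fin n → K) (i s : Fin n) :
    (diagonal u * vandermonde u) i s = u i ^ ((s : ℕ) + 1) := by
  rw [diagonal_mul, vandermonde_apply, pow_succ']

theorem shiftedLaplacian_mul_diagonal_mul_vandermonde (u : Fin n → K)
    (hu : Function.Injective u) :
    shiftedLaplacian u * (diagonal u * vandermonde u) =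
      diagonal u * vandermonde u * powerSumMatrix u := by
  ext i m
  have hdivdiff : ∀ j ∈ univ.erase i,
      (u i ^ ((m : ℕ) + 1) - u j ^ ((m : ℕ) + 1)) / (u i - u j) =
      ∑ t ∈ range (m + 1), u i ^ t * u j ^ ((m : ℕ) - t) := fun j hj => by
    rw [← (Commute.all _ _).geom_sum₂ (hu.ne (ne_of_mem_erase hj).symm)]
    simp
  have hself : ∑ t ∈ range (m + 1), u i ^ t * u i ^ ((m : ℕ) - t) =
      ((m : ℕ) + 1) * u i ^ (m : ℕ) := by
    simpa using geom_sum₂_self (u i) ((m : ℕ) + 1)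
  have hLHS : (shiftedLaplacian u * (diagonal u * vandermonde u)) i m =
      u i ^ ((m : ℕ) + 1) + u i * (∑ t ∈ range (m + 1), u i ^ t * powerSum u (m - t) -
        ((m : ℕ) + 1) * u i ^ (m : ℕ)) := by
    have hcol := shiftedLaplacian_mulVec_apply u (fun j => u j ^ ((m : ℕ) + 1)) i
    rw [sum_congr rfl hdivdiff, sum_erase_eq_sub (mem_univ i), sum_comm, hself] at hcol
    simp only [powerSum, mul_sum]
    convert hcol using 1
    rw [mul_apply]
    simp only [mulVec, dotProduct, diagonal_mul_vandermonde_apply]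
  have hRHS : (diagonal u * vandermonde u * powerSumMatrix u) i m =
      ∑ t ∈ range (m + 1), u i ^ (t + 1) * powerSum u (m - t) -
        u i ^ ((m : ℕ) + 1) * (m : ℕ) := by
    rw [powerSumMatrix, Matrix.mul_sub, Matrix.sub_apply, mul_diagonal,
      diagonal_mul_vandermonde_apply, mul_apply]
    simp only [diagonal_mul_vandermonde_apply, of_apply, mul_ite, mul_zero, Fin.le_iff_val_le_val]
    rw [Fin.sum_univ_eq_sum_range
      (fun s => if s ≤ (m : ℕ) then u i ^ (s + 1) * powerSum u (m - s) else 0), ← sum_filter]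
    congr 2
    ext t
    simp only [mem_filter, mem_range]
    omega
  rw [hLHS, hRHS, mul_sub, mul_sum]
  simp only [← mul_assoc, ← pow_succ']
  ring

theorem det_powerSumMatrix (u : Fin n → K) : (powerSumMatrix u).det = n ! := by
  have htri : (powerSumMatrix u).IsUpperTriangular := fun s m (hms : m < s) => by
    simp [powerSumMatrix, not_le.2 hms, hms.ne']
  rw [det_of_isUpperTriangular htri]
  simp only [powerSumMatrix, Matrix.sub_apply, of_apply, le_refl, if_true, diagonal_apply_eq,
    Nat.sub_self, powerSum, pow_zero, sum_const, card_univ, Fintype.card_fin, nsmul_one]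
  rw [Fin.prod_univ_eq_prod_range (fun m => (n : K) - m) n, ← prod_range_add_one_eq_factorial,
    ← prod_range_reflect]
  push_cast
  refine prod_congr rfl fun t ht => ?_
  have := mem_range.1 ht
  rw [Nat.cast_sub (by omega), Nat.cast_sub (by omega)]
  push_cast
  ring

theorem det_shiftedLaplacian (u : Fin n → K) (hu : Function.Injective u)
    (hu0 : ∀ i, u i ≠ 0) :
    (shiftedLaplacian u).det = n ! := by
  have hV : (diagonal u).det * (vandermonde u).det ≠ 0 := by
    rw [det_diagonal]
    exact mul_ne_zero (prod_ne_zero_iff.2 fun i _ => hu0 i) (det_vandermonde_ne_zero_iff.2 hu)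
  have h := congrArg det (shiftedLaplacian_mul_diagonal_mul_vandermonde u hu)
  simp only [det_mul, det_powerSumMatrix] at h
  rw [mul_comm] at h
  exact mul_left_cancel₀ hV h

end ShiftedLaplacian

theorem prod_prod_erase_eq_neg_one_pow_mul {ι R : Type*} [Fintype ι] [LinearOrder ι] [CommRing R]
    (g : ι → ι → R) (hg : ∀ i j, g j i = -g i j) :
    ∏ i, ∏ j ∈ univ.erase i, g i j =
      (-1) ^ (Fintype.card ι).choose 2 *
        ∏ i, ∏ j ∈ univ.filter (fun j => i < j), g i j ^ 2 := by
  have hsplit : ∀ i, ∏ j ∈ univ.erase i, g i j =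
      (∏ j ∈ univ.filter (· < i), g i j) * ∏ j ∈ univ.filter (i < ·), g i j := fun i => by
    rw [← prod_union (disjoint_filter.2 fun j _ h₁ h₂ => lt_asymm h₁ h₂), ← filter_or,
      ← filter_ne' univ i]
    simp_rw [ne_iff_lt_or_gt]
  have hswap :
      ∏ i, ∏ j ∈ univ.filter (· < i), g i j = ∏ i, ∏ j ∈ univ.filter (i < ·), g j i :=
    prod_comm' (s' := fun i => univ.filter (i < ·)) (t' := univ) fun i j => by simp
  have hcard : ∑ i : ι, #(univ.filter (i < ·)) = (Fintype.card ι).choose 2 := by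
    rw [← Fintype.card_product_filter_lt, card_filter, Fintype.sum_prod_type]
    simp only [card_filter]
  calc ∏ i, ∏ j ∈ univ.erase i, g i j
      = ∏ i, ∏ j ∈ univ.filter (i < ·), (-1) * g i j ^ 2 := by
        rw [prod_congr rfl fun i _ => hsplit i, prod_mul_distrib, hswap, ← prod_mul_distrib]
        refine prod_congr rfl fun i _ => ?_
        rw [← prod_mul_distrib]
        refine prod_congr rfl fun j _ => ?_
        rw [hg]
        ring
    _ = _ := by simp_rw [prod_mul_distrib, prod_const, prod_pow_eq_pow_sum, hcard]

namespace Fin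

variable {n : ℕ} (k : Fin (n + 1)) (s : Finset (Fin n))

theorem univ_sdiff_image_succAbove :
    univ \ s.image k.succAbove = insert k ((univ \ s).image k.succAbove) := by
  ext x
  rcases eq_self_or_eq_succAbove k x with rfl | ⟨j, rfl⟩
  · simp [succAbove_ne]
  · simp [succAbove_right_injective.eq_iff]

theorem univ_sdiff_insert_image_succAbove :
    univ \ insert k (s.image k.succAbove) = (univ \ s).image k.succAbove := by
  rw [sdiff_insert, univ_sdiff_image_succAbove, erase_insert]
  simp [succAbove_ne]

variable {M : Type*} [CommMonoid M] (g : Fin (n + 1) → M)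

theorem prod_univ_sdiff_image_succAbove :
    ∏ m ∈ univ \ s.image k.succAbove, g m = g k * ∏ m ∈ univ \ s, g (k.succAbove m) := by
  rw [univ_sdiff_image_succAbove, prod_insert (by simp [succAbove_ne]),
    prod_image succAbove_right_injective.injOn]

theorem prod_univ_sdiff_insert_image_succAbove :
    ∏ m ∈ univ \ insert k (s.image k.succAbove), g m =
      ∏ m ∈ univ \ s, g (k.succAbove m) := by
  rw [univ_sdiff_insert_image_succAbove, prod_image succAbove_right_injective.injOn]

end Fin

section Roots

variable {K : Type*} [Field K] {n : ℕ}

def relativeRoots (α : Fin (n + 1) → K) (k : Fin (n + 1)) : Fin n → K :=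
  fun i => α (k.succAbove i) - α k

variable {α : Fin (n + 1) → K} {k : Fin (n + 1)}

@[simp]
theorem relativeRoots_sub_relativeRoots (i j : Fin n) :
    relativeRoots α k i - relativeRoots α k j = α (k.succAbove i) - α (k.succAbove j) :=
  sub_sub_sub_cancel_right _ _ _

theorem relativeRoots_injective (hα : Function.Injective α) :
    Function.Injective (relativeRoots α k) := fun _ _ h =>
  Fin.succAbove_right_injective (hα (sub_left_injective h))

theorem relativeRoots_ne_zero (hα : Function.Injective α) (i : Fin n) :
    relativeRoots α k i ≠ 0 :=
  sub_ne_zero.2 (hα.ne (Fin.succAbove_ne k i))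

theorem prod_sub_sdiff_succAbove_succAbove (hα : Function.Injective α) {i j : Fin n}
    (hij : i ≠ j) :
    ∏ m ∈ univ \ {k.succAbove i, k.succAbove j}, (α (k.succAbove i) - α m) =
      (∏ m ∈ univ.erase i, (relativeRoots α k i - relativeRoots α k m)) *
        (relativeRoots α k i / (relativeRoots α k i - relativeRoots α k j)) := by
  set u := relativeRoots α k with hu
  have herase :
      ∏ m ∈ univ.erase i, (u i - u m) = (u i - u j) * ∏ m ∈ univ \ {i, j}, (u i - u m) := by
    rw [sdiff_insert, sdiff_singleton_eq_erase, erase_right_comm,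
      mul_prod_erase _ (fun m => u i - u m) (by simp [hij.symm])]
  have hne : u i - u j ≠ 0 := sub_ne_zero.2 ((relativeRoots_injective hα).ne hij)
  rw [← image_singleton k.succAbove j, ← image_insert, Fin.prod_univ_sdiff_image_succAbove,
    herase]
  simp only [← relativeRoots_sub_relativeRoots, ← hu]
  change u i * _ = _
  field_simp

theorem prod_sub_sdiff_succAbove_self (i : Fin n) :
    ∏ m ∈ univ \ {k.succAbove i, k}, (α (k.succAbove i) - α m) =
      ∏ m ∈ univ.erase i, (relativeRoots α k i - relativeRoots α k m) := by
  rw [pair_comm, ← image_singleton k.succAbove i, Fin.prod_univ_sdiff_insert_image_succAbove,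
    sdiff_singleton_eq_erase]
  simp

theorem submatrix_succAbove_eq_diagonal_mul_shiftedLaplacian (hα : Function.Injective α)
    (T : Matrix (Fin (n + 1)) (Fin (n + 1)) K)
    (hT : ∀ i j, T i j =
      if i = j then ∑ j' ∈ univ \ {i}, ∏ k ∈ univ \ {i, j'}, (α i - α k)
      else -∏ k ∈ univ \ {i, j}, (α i - α k)) :
    T.submatrix k.succAbove k.succAbove =
      diagonal (fun i => ∏ j ∈ univ.erase i, (relativeRoots α k i - relativeRoots α k j)) *
        shiftedLaplacian (relativeRoots α k) := by
  ext i j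
  rw [submatrix_apply, diagonal_mul, hT, shiftedLaplacian, of_apply]
  rcases eq_or_ne i j with rfl | hij
  · rw [if_pos rfl, if_pos rfl, ← image_singleton k.succAbove i, Fin.univ_sdiff_image_succAbove,
      sum_insert (by simp [Fin.succAbove_ne]), sum_image Fin.succAbove_right_injective.injOn,
      sdiff_singleton_eq_erase, prod_sub_sdiff_succAbove_self,
      sum_congr rfl fun j hj => prod_sub_sdiff_succAbove_succAbove hα (ne_of_mem_erase hj).symm,
      ← mul_sum, mul_add, mul_one]
  · rw [if_neg (Fin.succAbove_right_injective.ne hij), if_neg hij,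
      prod_sub_sdiff_succAbove_succAbove hα hij, mul_neg]

theorem det_submatrix_succAbove (hα : Function.Injective α)
    (T : Matrix (Fin (n + 1)) (Fin (n + 1)) K)
    (hT : ∀ i j, T i j =
      if i = j then ∑ j' ∈ univ \ {i}, ∏ k ∈ univ \ {i, j'}, (α i - α k)
      else -∏ k ∈ univ \ {i, j}, (α i - α k)) :
    (T.submatrix k.succAbove k.succAbove).det =
      (-1) ^ n.choose 2 * n ! *
        ∏ i : Fin n, ∏ j ∈ univ.filter (fun j => i < j),
          (α (k.succAbove i) - α (k.succAbove j)) ^ 2 := by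
  rw [submatrix_succAbove_eq_diagonal_mul_shiftedLaplacian hα T hT, det_mul, det_diagonal,
    det_shiftedLaplacian _ (relativeRoots_injective hα) (relativeRoots_ne_zero hα),
    prod_prod_erase_eq_neg_one_pow_mul _ fun i j => (neg_sub _ _).symm, Fintype.card_fin]
  simp only [relativeRoots_sub_relativeRoots]
  ring

end Roots

/-- Here the number of roots is `n + 1` (the paper's `n`), so the paper's `n - 1` is `n`.
Deleting the `k`-th row and column is realized via `Fin.succAbove k`. -/
theorem stmt4 (n : ℕ) (α : Fin (n + 1) → ℂ) (hα : Function.Injective α)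
    (T : Matrix (Fin (n + 1)) (Fin (n + 1)) ℂ)
    (hT : ∀ i j, T i j =
      if i = j then ∑ j' ∈ univ \ {i}, ∏ k ∈ univ \ {i, j'}, (α i - α k)
      else -∏ k ∈ univ \ {i, j}, (α i - α k))
    (k : Fin (n + 1)) :
    (T.submatrix k.succAbove k.succAbove).det =
      (-1 : ℂ) ^ (Nat.choose n 2) * (Nat.factorial n : ℂ) *
        ∏ i : Fin n, ∏ j ∈ univ.filter (fun j => i < j),
          (α (k.succAbove i) - α (k.succAbove j)) ^ 2 ∧
    (T.submatrix k.succAbove k.succAbove).det ≠ 0 := by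
  have hdet := det_submatrix_succAbove hα T hT (k := k)
  refine ⟨hdet, hdet ▸ ?_⟩
  simpa [Nat.factorial_ne_zero, prod_eq_zero_iff] using fun i j (hij : i < j) =>
    sub_ne_zero.2 (hα.ne (Fin.succAbove_right_injective.ne hij.ne))
end

section
/- If P(x₁, …, x_r) is a symmetric polynomial over a field of characteristic zero (or an integral domain) which vanishes whenever any two of the variables are set equal, then P is divisible by ∏_{1 ≤ i < j ≤ r}(x_i - x_j)². -/
/-!
Substituting `X j := X i` kills exactly the multiples of `X i - X j`, so `P = (X i - X j) * Q`.
Symmetry under the transposition `(i j)`, which negates `X i - X j`, makes `Q` antisymmetric;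
since the substitution does not see the transposition, it sends `Q` to its own negative, hence
to `0` as `2 ≠ 0`, and `(X i - X j) ^ 2 ∣ P`. The `X i - X j` with `i < j` are primes,
none dividing another, so the product of their squares divides `P`.
-/

open Finset

namespace MvPolynomial

variable {R σ : Type*} [CommRing R]

section Substitution

variable [DecidableEq σ]

noncomputable def substVar (j : σ) (a : MvPolynomial σ R) :
    MvPolynomial σ R →ₐ[R] MvPolynomial σ R :=
  aeval fun l => if l = j then a else X l

@[simp]
lemma substVar_X (j l : σ) (a : MvPolynomial σ R) :
    substVar j a (X l) = if l = j then a else X l :=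
  aeval_X _ _

lemma X_sub_dvd_sub_substVar (j : σ) (a p : MvPolynomial σ R) :
    X j - a ∣ p - substVar j a p := by
  induction p using induction_on with
  | C c => simp [substVar]
  | add p q hp hq => simpa only [map_add, add_sub_add_comm] using dvd_add hp hq
  | mul_X p l hp =>
    have hX : X j - a ∣ X l - substVar j a (X l) := by
      by_cases hl : l = j <;> simp [hl]
    rw [map_mul, show p * X l - substVar j a p * substVar j a (X l) =
      (p - substVar j a p) * X l + substVar j a p * (X l - substVar j a (X l)) by ring]
    exact dvd_add (hp.mul_right _) (hX.mul_left _)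

lemma X_sub_X_dvd_iff {i j : σ} (hij : i ≠ j) {p : MvPolynomial σ R} :
    X i - X j ∣ p ↔ substVar j (X i) p = 0 := by
  refine ⟨fun ⟨q, hq⟩ => by simp [hq, hij], fun h => ?_⟩
  simpa [h] using (X_sub_dvd_sub_substVar j (X i) p).neg_left

lemma substVar_rename_swap (i j : σ) (p : MvPolynomial σ R) :
    substVar j (X i) (rename (Equiv.swap i j) p) = substVar j (X i) p := by
  simp only [substVar, aeval_rename]
  congr 2
  funext l
  rcases eq_or_ne l i with rfl | hi
  · by_cases hj : l = j <;> simp [hj]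
  · rcases eq_or_ne l j with rfl | hj
    · simp
    · simp [Equiv.swap_apply_of_ne_of_ne hi hj, hj]

end Substitution

variable [IsDomain R]

lemma X_sub_X_ne_zero {i j : σ} (hij : i ≠ j) : (X i - X j : MvPolynomial σ R) ≠ 0 :=
  sub_ne_zero.2 fun h => hij (X_injective h)

lemma prime_X_sub_X {i j : σ} (hij : i ≠ j) : Prime (X i - X j : MvPolynomial σ R) := by
  classical
  refine ⟨X_sub_X_ne_zero hij, fun hu => ?_, fun a b hab => ?_⟩
  · simpa using hu.map (eval fun _ => (0 : R))
  · simpa only [X_sub_X_dvd_iff hij, map_mul, mul_eq_zero] using hab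

lemma eq_of_X_sub_X_dvd [LinearOrder σ] {i j k l : σ} (hij : i < j) (hkl : k < l)
    (h : (X k - X l : MvPolynomial σ R) ∣ X i - X j) : k = i ∧ l = j := by
  rw [X_sub_X_dvd_iff hkl.ne, map_sub, substVar_X, substVar_X, sub_eq_zero] at h
  split_ifs at h <;> have := X_injective h <;> exact ⟨by order, by order⟩

lemma sq_X_sub_X_dvd_of_isSymmetric [DecidableEq σ] (h2 : (2 : R) ≠ 0)
    {p : MvPolynomial σ R} (hp : p.IsSymmetric) {i j : σ} (hij : i ≠ j)
    (hvan : substVar j (X i) p = 0) : (X i - X j) ^ 2 ∣ p := by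
  obtain ⟨q, rfl⟩ := (X_sub_X_dvd_iff hij).2 hvan
  have hswap : rename (Equiv.swap i j) (X i - X j : MvPolynomial σ R) = -(X i - X j) := by
    simp
  have hanti : rename (Equiv.swap i j) q = -q := by
    have := hp (Equiv.swap i j)
    rw [map_mul, hswap, neg_mul, ← mul_neg] at this
    exact neg_eq_iff_eq_neg.1 (mul_left_cancel₀ (X_sub_X_ne_zero hij) this)
  have h2' : (2 : MvPolynomial σ R) ≠ 0 := by
    rw [← map_ofNat C 2, ← C_0]
    exact (C_injective σ R).ne h2
  have hq : substVar j (X i) q = 0 := by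
    have := congr(substVar j (X i) $hanti)
    rw [substVar_rename_swap, map_neg, eq_neg_iff_add_eq_zero, ← two_mul] at this
    exact (mul_eq_zero.1 this).resolve_left h2'
  rw [sq]
  exact mul_dvd_mul_left _ ((X_sub_X_dvd_iff hij).2 hq)

end MvPolynomial

lemma Finset.prod_pow_dvd_of_prime {M ι : Type*} [CommMonoidWithZero M] [IsCancelMulZero M]
    {s : Finset ι} {f : ι → M} {x : M} (n : ℕ) (hp : ∀ a ∈ s, Prime (f a))
    (hf : (s : Set ι).Pairwise fun a b => ¬ f a ∣ f b) (hx : ∀ a ∈ s, f a ^ n ∣ x) :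
    ∏ a ∈ s, f a ^ n ∣ x := by
  classical
  induction s using Finset.induction_on generalizing x with
  | empty => simp
  | insert a s ha ih =>
    simp only [mem_insert, forall_eq_or_imp, coe_insert, Set.pairwise_insert] at hp hf hx
    obtain ⟨y, rfl⟩ := hx.1
    rw [prod_insert ha]
    refine mul_dvd_mul_left _ (ih hp.2 hf.1 fun b hb => ?_)
    have hba : ¬ f b ∣ f a := (hf.2 b hb (ne_of_mem_of_not_mem hb ha).symm).2
    exact (hp.2 b hb).pow_dvd_of_dvd_mul_left n (fun h => hba ((hp.2 b hb).dvd_of_dvd_pow h))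
      (hx.2 b hb)

theorem stmt5 {F : Type*} [Field F] [CharZero F] (r : ℕ)
    (P : MvPolynomial (Fin r) F) (hsymm : P.IsSymmetric)
    (hvan : ∀ i j : Fin r, i ≠ j →
      (MvPolynomial.aeval fun l => if l = j then MvPolynomial.X i else MvPolynomial.X l) P
        = (0 : MvPolynomial (Fin r) F)) :
    (∏ i : Fin r, ∏ j ∈ univ.filter (fun j => i < j),
      (MvPolynomial.X i - MvPolynomial.X j) ^ 2) ∣ P := by
  open MvPolynomial in
  rw [← prod_finset_product (univ.filter fun p : Fin r × Fin r => p.1 < p.2) _ _ (by simp)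
    (f := fun p => (X p.1 - X p.2) ^ 2)]
  refine prod_pow_dvd_of_prime 2 (fun p hp => prime_X_sub_X (mem_filter.1 hp).2.ne) ?_
    fun p hp => sq_X_sub_X_dvd_of_isSymmetric two_ne_zero hsymm (mem_filter.1 hp).2.ne
      (hvan _ _ (mem_filter.1 hp).2.ne)
  intro p hp q hq hpq hdvd
  obtain ⟨h1, h2⟩ := eq_of_X_sub_X_dvd (mem_filter.1 hq).2 (mem_filter.1 hp).2 hdvd
  exact hpq (Prod.ext h1 h2)
end

section
/- Let α₁, …, αₙ be distinct complex numbers and T the Jacobian matrix of (α₁,…,αₙ) ↦ (f'(α₁),…,f'(αₙ)) with f(x) = ∏(x - αₖ). As polynomials in α₁: for i, j > 1 with i ≠ j, T_{ij} has degree ≤ 1 in α₁ ; for i > 1, T_{i1} has degree 0 in α₁; and for j > 1, T_{1j} has degree n - 2 in α₁ with leading coefficient -1, while T_{11} has degree n - 2 in α₁ with leading coefficient n - 1. -/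
open Finset Polynomial Matrix

/-!
Write `z` for the index `0` of `α₁ = X`. For `i ≠ z` every factor `A i - A k` is a constant except
the one with `k = z`, which is linear, so off row `z` the entries have degree at most one, and
degree zero in column `z`. In row `z` the product is `∏ (X - α k)` over `n - 2` indices, monic of
degree `n - 2`, and the diagonal entry is the derivative of the monic `∏_{k ≠ z} (X - α k)` of
degree `n - 1`, whose leading coefficient is therefore `n - 1`.
-/

namespace Polynomial

variable {R ι : Type*} [CommRing R] [DecidableEq ι]

noncomputable def updateX (a : ι → R) (z : ι) : ι → R[X] := Function.update (fun k => C (a k)) z X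

variable (a : ι → R) {z : ι}

@[simp] theorem updateX_self : updateX a z z = X := Function.update_self ..

@[simp] theorem updateX_of_ne {k : ι} (hk : k ≠ z) : updateX a z k = C (a k) :=
  Function.update_of_ne hk ..

theorem prod_updateX_sub_of_ne {s : Finset ι} {i : ι} (hi : i ≠ z) (hz : z ∉ s) :
    ∏ k ∈ s, (updateX a z i - updateX a z k) = C (∏ k ∈ s, (a i - a k)) := by
  rw [map_prod]
  refine prod_congr rfl fun k hk => ?_
  rw [updateX_of_ne a hi, updateX_of_ne a (ne_of_mem_of_not_mem hk hz), C_sub]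

theorem natDegree_prod_updateX_sub_le_one (s : Finset ι) {i : ι} (hi : i ≠ z) :
    (∏ k ∈ s, (updateX a z i - updateX a z k)).natDegree ≤ 1 := by
  by_cases hz : z ∈ s
  · rw [← mul_prod_erase s _ hz, prod_updateX_sub_of_ne a hi (notMem_erase z s),
      updateX_of_ne a hi, updateX_self]
    refine natDegree_mul_le.trans ?_
    rw [natDegree_C, add_zero]
    compute_degree
  · rw [prod_updateX_sub_of_ne a hi hz, natDegree_C]; exact zero_le_one

theorem prod_updateX_self_sub {s : Finset ι} (hz : z ∉ s) :
    ∏ k ∈ s, (updateX a z z - updateX a z k) = ∏ k ∈ s, (X - C (a k)) :=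
  prod_congr rfl fun k hk => by
    rw [updateX_self, updateX_of_ne a (ne_of_mem_of_not_mem hk hz)]

variable [Fintype ι]

theorem sum_prod_updateX_self_sub :
    ∑ j ∈ univ \ {z}, ∏ k ∈ univ \ {z, j}, (updateX a z z - updateX a z k) =
      derivative (∏ k ∈ univ \ {z}, (X - C (a k))) := by
  rw [derivative_prod_finset]
  refine sum_congr rfl fun j _ => ?_
  rw [prod_updateX_self_sub a (by simp), derivative_X_sub_C, mul_one, ← sdiff_insert, pair_comm]

end Polynomial

theorem stmt16_general (n : ℕ) (hn : 0 < n) (α : Fin n → ℂ)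
    (A : Fin n → Polynomial ℂ)
    (hA : ∀ k, A k = if k = (⟨0, hn⟩ : Fin n) then X else C (α k))
    (T : Matrix (Fin n) (Fin n) (Polynomial ℂ))
    (hT : ∀ i j, T i j =
      if i = j then ∑ j' ∈ univ \ {i}, ∏ k ∈ univ \ {i, j'}, (A i - A k)
      else -∏ k ∈ univ \ {i, j}, (A i - A k)) :
    (∀ i j : Fin n, i ≠ ⟨0, hn⟩ → j ≠ ⟨0, hn⟩ → i ≠ j → (T i j).natDegree ≤ 1) ∧
    (∀ i : Fin n, i ≠ ⟨0, hn⟩ → (T i ⟨0, hn⟩).natDegree = 0) ∧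
    (∀ j : Fin n, j ≠ ⟨0, hn⟩ →
      (T ⟨0, hn⟩ j).natDegree = n - 2 ∧ (T ⟨0, hn⟩ j).coeff (n - 2) = -1) ∧
    ((T ⟨0, hn⟩ ⟨0, hn⟩).natDegree = n - 2 ∧
      (T ⟨0, hn⟩ ⟨0, hn⟩).coeff (n - 2) = (n : ℂ) - 1) := by
  set z : Fin n := ⟨0, hn⟩
  obtain rfl : A = updateX α z := funext fun k => by rw [hA, updateX, Function.update_apply]
  refine ⟨fun i j hi _ hij => ?_, fun i hi => ?_, fun j hj => ?_, ?_⟩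
  · rw [hT, if_neg hij, natDegree_neg]
    exact natDegree_prod_updateX_sub_le_one α _ hi
  · rw [hT, if_neg hi, natDegree_neg, prod_updateX_sub_of_ne α hi (by simp), natDegree_C]
  · have hdeg : (∏ k ∈ univ \ {z, j}, (X - C (α k))).natDegree = n - 2 := by
      rw [natDegree_finsetProd_X_sub_C_eq_card, card_univ_sdiff, card_pair (Ne.symm hj),
        Fintype.card_fin]
    rw [hT, if_neg (Ne.symm hj), prod_updateX_self_sub α (by simp), natDegree_neg, coeff_neg,
      ← hdeg, (monic_prod_X_sub_C _ _).coeff_natDegree]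
    exact ⟨rfl, rfl⟩
  · set p := ∏ k ∈ univ \ {z}, (X - C (α k))
    have hdeg : p.natDegree = n - 1 := by
      rw [natDegree_finsetProd_X_sub_C_eq_card, card_univ_sdiff, card_singleton, Fintype.card_fin]
    have hdeg' : (derivative p).natDegree = n - 2 := by
      rw [natDegree_derivative, hdeg]; omega
    rw [hT, if_pos rfl, sum_prod_updateX_self_sub, ← hdeg', coeff_natDegree,
      leadingCoeff_derivative, (monic_prod_X_sub_C _ _).leadingCoeff, hdeg, one_mul,
      Nat.cast_pred hn]
    exact ⟨rfl, rfl⟩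

/-- The entries of `T`, viewed as polynomials in `α₁` (the variable `X`, at index `0`)
with the other `α`'s as constants. -/
theorem stmt16 (n : ℕ) (hn : 0 < n) (α : Fin n → ℂ) (hα : Function.Injective α)
    (A : Fin n → Polynomial ℂ)
    (hA : ∀ k, A k = if k = (⟨0, hn⟩ : Fin n) then X else C (α k))
    (T : Matrix (Fin n) (Fin n) (Polynomial ℂ))
    (hT : ∀ i j, T i j =
      if i = j then ∑ j' ∈ univ \ {i}, ∏ k ∈ univ \ {i, j'}, (A i - A k)
      else -∏ k ∈ univ \ {i, j}, (A i - A k)) :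
    (∀ i j : Fin n, i ≠ ⟨0, hn⟩ → j ≠ ⟨0, hn⟩ → i ≠ j → (T i j).natDegree ≤ 1) ∧
    (∀ i : Fin n, i ≠ ⟨0, hn⟩ → (T i ⟨0, hn⟩).natDegree = 0) ∧
    (∀ j : Fin n, j ≠ ⟨0, hn⟩ →
      (T ⟨0, hn⟩ j).natDegree = n - 2 ∧ (T ⟨0, hn⟩ j).coeff (n - 2) = -1) ∧
    ((T ⟨0, hn⟩ ⟨0, hn⟩).natDegree = n - 2 ∧
      (T ⟨0, hn⟩ ⟨0, hn⟩).coeff (n - 2) = (n : ℂ) - 1) :=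
  stmt16_general n hn α A hA T hT
end
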